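/- arXiv:0807.4753 — 5 statements merged into one kernel-verified Lean document; each statement's English description precedes it below -/
import Mathlib

section
/- Let 𝒩 be an ε-randomizing random unitary channel on dimension d with n unitaries, where 0 < ε < 1, and suppose n < d^(2-2/p)/(1+ε)^(2-2/p) for some p > 2. Then the maximal output p-norm is strictly supermultiplicative: ν_p(𝒩)·ν_p(𝒩̄) ≤ ((1+ε)/d)^(2-2/p) < 1/n ≤ ν_p(𝒩 ⊗ 𝒩̄). -/
open scoped BigOperators Kronecker ComplexOrder Matrix

/-- Schatten p-norm of a Hermitian matrix, via its eigenvalues. -/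
noncomputable def schattenNorm {ι : Type*} [Fintype ι] [DecidableEq ι]
    (p : ℝ) (M : Matrix ι ι ℂ) : ℝ :=
  if h : M.IsHermitian then (∑ i, |h.eigenvalues i| ^ p) ^ (1 / p) else 0

/-- A density operator: positive semidefinite with unit trace. -/
def IsDensity {ι : Type*} [Fintype ι] [DecidableEq ι] (ρ : Matrix ι ι ℂ) : Prop :=
  ρ.PosSemidef ∧ ρ.trace = 1

/-- Maximal output p-norm ν_p of a channel. -/
noncomputable def maxOutputPNorm {ι κ : Type*} [Fintype ι] [DecidableEq ι]
    [Fintype κ] [DecidableEq κ] (p : ℝ) (N : Matrix ι ι ℂ → Matrix κ κ ℂ) : ℝ :=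
  sSup { x | ∃ ρ, IsDensity ρ ∧ x = schattenNorm p (N ρ) }

/-!
Every output of `𝒩` is a density matrix with spectrum in `[0, (1 + ε) / d]`, so its `p`-th power
sum is at most `((1 + ε) / d) ^ (p - 1)`; the outputs of `𝒩̄` are transposes of outputs of `𝒩`
and obey the same bound. On the other side, `V ⊗ V̄` fixes the maximally entangled vector `φ`, so
the `n` diagonal terms of `𝒩 ⊗ 𝒩̄` already give `⟨φ, (𝒩 ⊗ 𝒩̄)(φφ*) φ⟩ ≥ n / n² = 1 / n`, which
bounds the top eigenvalue, and hence the `p`-norm, of that output from below.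
-/

open Matrix
open scoped Pointwise

section Spectral

variable {ι : Type*} [Fintype ι] [DecidableEq ι]

lemma Matrix.IsHermitian.posSemidef_smul_one_sub_iff {A : Matrix ι ι ℂ} (hA : A.IsHermitian)
    (c : ℝ) : (c • 1 - A).PosSemidef ↔ ∀ i, hA.eigenvalues i ≤ c := by
  have hB : (c • 1 - A).IsHermitian := (isHermitian_one.smul (IsSelfAdjoint.all c)).sub hA
  have hspec : Set.range hB.eigenvalues = ({c} : Set ℝ) - Set.range hA.eigenvalues := by
    rw [← hB.spectrum_real_eq_range_eigenvalues, ← hA.spectrum_real_eq_range_eigenvalues,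
      spectrum.singleton_sub_eq, Algebra.algebraMap_eq_smul_one]
  simp only [hB.posSemidef_iff_eigenvalues_nonneg, Pi.le_def, Pi.zero_apply]
  constructor
  · intro h i
    obtain ⟨j, hj⟩ : c - hA.eigenvalues i ∈ Set.range hB.eigenvalues :=
      hspec ▸ Set.sub_mem_sub rfl (Set.mem_range_self i)
    linarith [h j]
  · intro h j
    obtain ⟨_, rfl, _, ⟨i, rfl⟩, hj⟩ := hspec ▸ Set.mem_range_self j
    simpa [← hj] using h i

lemma Matrix.PosSemidef.re_dotProduct_mulVec_le {A : Matrix ι ι ℂ} {c : ℝ}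
    (h : (c • 1 - A).PosSemidef) {v : ι → ℂ} (hv : star v ⬝ᵥ v = 1) :
    (star v ⬝ᵥ A *ᵥ v).re ≤ c := by
  have := h.re_dotProduct_nonneg v
  rw [sub_mulVec, dotProduct_sub, smul_mulVec, one_mulVec, dotProduct_smul, hv] at this
  simpa using this

lemma Matrix.IsHermitian.sum_eigenvalues_eq_re_trace {A : Matrix ι ι ℂ} (hA : A.IsHermitian) :
    ∑ i, hA.eigenvalues i = A.trace.re := by
  simp [hA.trace_eq_sum_eigenvalues]

lemma IsDensity.sum_eigenvalues {A : Matrix ι ι ℂ} (hA : IsDensity A) :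
    ∑ i, hA.1.isHermitian.eigenvalues i = 1 := by
  rw [hA.1.isHermitian.sum_eigenvalues_eq_re_trace, hA.2, Complex.one_re]

lemma IsDensity.eigenvalues_le_one {A : Matrix ι ι ℂ} (hA : IsDensity A) (i : ι) :
    hA.1.isHermitian.eigenvalues i ≤ 1 :=
  hA.sum_eigenvalues ▸
    Finset.single_le_sum (fun j _ ↦ hA.1.eigenvalues_nonneg j) (Finset.mem_univ i)

omit [Fintype ι] in
lemma posSemidef_smul_one_sub_transpose_iff {A : Matrix ι ι ℂ} {c : ℝ} :
    (c • 1 - Aᵀ).PosSemidef ↔ (c • 1 - A).PosSemidef := by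
  rw [← posSemidef_transpose_iff, transpose_sub, transpose_smul, transpose_one,
    transpose_transpose]

lemma IsDensity.transpose {A : Matrix ι ι ℂ} (hA : IsDensity A) : IsDensity Aᵀ :=
  ⟨hA.1.transpose, by rw [trace_transpose, hA.2]⟩

lemma isDensity_vecMulVec_star {v : ι → ℂ} (hv : star v ⬝ᵥ v = 1) :
    IsDensity (vecMulVec v (star v)) :=
  ⟨posSemidef_vecMulVec_self_star v, by rw [trace_vecMulVec, dotProduct_comm, hv]⟩

end Spectral

lemma Finset.sum_rpow_le_of_sum_eq_one {α : Type*} (s : Finset α) {x : α → ℝ} {c p : ℝ}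
    (hp : 1 ≤ p) (h0 : ∀ a ∈ s, 0 ≤ x a) (hc : ∀ a ∈ s, x a ≤ c) (hsum : ∑ a ∈ s, x a = 1) :
    ∑ a ∈ s, x a ^ p ≤ c ^ (p - 1) :=
  calc ∑ a ∈ s, x a ^ p = ∑ a ∈ s, x a * x a ^ (p - 1) := by
        refine Finset.sum_congr rfl fun a ha ↦ ?_
        rw [← Real.rpow_one_add' (h0 a ha) (by linarith), add_sub_cancel]
    _ ≤ ∑ a ∈ s, x a * c ^ (p - 1) := by
        gcongr with a ha
        exacts [h0 a ha, h0 a ha, hc a ha]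
    _ = c ^ (p - 1) := by rw [← Finset.sum_mul, hsum, one_mul]

section Schatten

variable {ι : Type*} [Fintype ι] [DecidableEq ι]

lemma schattenNorm_nonneg (p : ℝ) (A : Matrix ι ι ℂ) : 0 ≤ schattenNorm p A := by
  unfold schattenNorm
  split_ifs
  exacts [by positivity, le_rfl]

lemma Matrix.IsHermitian.eigenvalues_le_schattenNorm {A : Matrix ι ι ℂ} (hA : A.IsHermitian)
    {p : ℝ} (hp : 0 < p) (i : ι) : hA.eigenvalues i ≤ schattenNorm p A := by
  rw [schattenNorm, dif_pos hA]
  calc hA.eigenvalues i ≤ |hA.eigenvalues i| := le_abs_self _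
    _ = (|hA.eigenvalues i| ^ p) ^ (1 / p) := by
        rw [← Real.rpow_mul (abs_nonneg _), mul_one_div_cancel hp.ne', Real.rpow_one]
    _ ≤ (∑ j, |hA.eigenvalues j| ^ p) ^ (1 / p) := by
        gcongr
        exact Finset.single_le_sum (f := fun j ↦ |hA.eigenvalues j| ^ p)
          (fun j _ ↦ by positivity) (Finset.mem_univ i)

lemma Matrix.IsHermitian.re_dotProduct_mulVec_le_schattenNorm [Nonempty ι] {A : Matrix ι ι ℂ}
    (hA : A.IsHermitian) {p : ℝ} (hp : 0 < p) {v : ι → ℂ} (hv : star v ⬝ᵥ v = 1) :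
    (star v ⬝ᵥ A *ᵥ v).re ≤ schattenNorm p A := by
  obtain ⟨i, hi⟩ := Finite.exists_max hA.eigenvalues
  exact (((hA.posSemidef_smul_one_sub_iff _).2 hi).re_dotProduct_mulVec_le hv).trans
    (hA.eigenvalues_le_schattenNorm hp i)

lemma IsDensity.schattenNorm_le {A : Matrix ι ι ℂ} (hA : IsDensity A) {c p : ℝ}
    (hc : (c • 1 - A).PosSemidef) (hc0 : 0 ≤ c) (hp : 1 ≤ p) :
    schattenNorm p A ≤ c ^ (1 - 1 / p) := by
  have hH := hA.1.isHermitian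
  have hsum : ∑ i, |hH.eigenvalues i| ^ p ≤ c ^ (p - 1) := by
    simp_rw [abs_of_nonneg (hA.1.eigenvalues_nonneg _)]
    exact Finset.sum_rpow_le_of_sum_eq_one _ hp (fun i _ ↦ hA.1.eigenvalues_nonneg i)
      (fun i _ ↦ (hH.posSemidef_smul_one_sub_iff c).1 hc i) hA.sum_eigenvalues
  rw [schattenNorm, dif_pos hH]
  calc (∑ i, |hH.eigenvalues i| ^ p) ^ (1 / p) ≤ (c ^ (p - 1)) ^ (1 / p) := by gcongr
    _ = c ^ (1 - 1 / p) := by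
        rw [← Real.rpow_mul hc0]
        congr 1
        field_simp

lemma IsDensity.schattenNorm_le_one {A : Matrix ι ι ℂ} (hA : IsDensity A) {p : ℝ} (hp : 1 ≤ p) :
    schattenNorm p A ≤ 1 := by
  have hc : ((1 : ℝ) • 1 - A).PosSemidef :=
    (hA.1.isHermitian.posSemidef_smul_one_sub_iff 1).2 hA.eigenvalues_le_one
  simpa using hA.schattenNorm_le hc zero_le_one hp

end Schatten

section MaxOutputPNorm

variable {ι κ : Type*} [Fintype ι] [DecidableEq ι] [Fintype κ] [DecidableEq κ]

lemma maxOutputPNorm_nonneg (p : ℝ) (Φ : Matrix ι ι ℂ → Matrix κ κ ℂ) :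
    0 ≤ maxOutputPNorm p Φ :=
  Real.sSup_nonneg fun _ ⟨_, _, hx⟩ ↦ hx ▸ schattenNorm_nonneg _ _

lemma maxOutputPNorm_le {p b : ℝ} {Φ : Matrix ι ι ℂ → Matrix κ κ ℂ} (hb : 0 ≤ b)
    (h : ∀ ρ, IsDensity ρ → schattenNorm p (Φ ρ) ≤ b) : maxOutputPNorm p Φ ≤ b :=
  Real.sSup_le (fun _ ⟨ρ, hρ, hx⟩ ↦ hx ▸ h ρ hρ) hb

lemma schattenNorm_le_maxOutputPNorm {p : ℝ} (hp : 1 ≤ p) {Φ : Matrix ι ι ℂ → Matrix κ κ ℂ}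
    (hΦ : ∀ ρ, IsDensity ρ → IsDensity (Φ ρ)) {ρ : Matrix ι ι ℂ} (hρ : IsDensity ρ) :
    schattenNorm p (Φ ρ) ≤ maxOutputPNorm p Φ :=
  le_csSup ⟨1, fun _ ⟨σ, hσ, hx⟩ ↦ hx ▸ (hΦ σ hσ).schattenNorm_le_one hp⟩ ⟨ρ, hρ, rfl⟩

end MaxOutputPNorm

section Channel

variable {ι α : Type*} [Fintype ι] [Fintype α]

noncomputable def randomUnitaryChannel (W : α → Matrix ι ι ℂ) (ρ : Matrix ι ι ℂ) :
    Matrix ι ι ℂ :=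
  (Fintype.card α : ℂ)⁻¹ • ∑ a, W a * ρ * (W a)ᴴ

lemma randomUnitaryChannel_map_conj (W : α → Matrix ι ι ℂ) (ρ : Matrix ι ι ℂ) :
    randomUnitaryChannel (fun a ↦ (W a).map (starRingEnd ℂ)) ρ =
      (randomUnitaryChannel W ρᵀ)ᵀ := by
  simp only [randomUnitaryChannel, transpose_smul, transpose_sum, transpose_mul,
    transpose_transpose, Matrix.mul_assoc, ← Complex.star_def, ← transpose_conjTranspose,
    conjTranspose_conjTranspose, conjTranspose_transpose_eq_transpose_conjTranspose]

lemma dotProduct_vecMulVec_star_mulVec (u v : ι → ℂ) :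
    star v ⬝ᵥ vecMulVec u (star u) *ᵥ v = Complex.normSq (star v ⬝ᵥ u) := by
  rw [dotProduct_mulVec, vecMul_vecMulVec, smul_dotProduct, star_dotProduct u v, smul_eq_mul]
  exact Complex.mul_conj _

lemma mul_vecMulVec_star_mul_conjTranspose (W : Matrix ι ι ℂ) (v : ι → ℂ) :
    W * vecMulVec v (star v) * Wᴴ = vecMulVec (W *ᵥ v) (star (W *ᵥ v)) := by
  rw [mul_vecMulVec, vecMulVec_mul, star_mulVec]

lemma le_re_dotProduct_randomUnitaryChannel_vecMulVec {W : α → Matrix ι ι ℂ} {v : ι → ℂ}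
    (hv : star v ⬝ᵥ v = 1) (s : Finset α) (hs : ∀ a ∈ s, W a *ᵥ v = v) :
    (s.card : ℝ) / (Fintype.card α : ℝ) ≤
      (star v ⬝ᵥ randomUnitaryChannel W (vecMulVec v (star v)) *ᵥ v).re := by
  set f : α → ℝ := fun a ↦ Complex.normSq (star v ⬝ᵥ W a *ᵥ v)
  have hf (a : α) : (star v ⬝ᵥ (W a * vecMulVec v (star v) * (W a)ᴴ) *ᵥ v).re = f a := by
    rw [mul_vecMulVec_star_mul_conjTranspose, dotProduct_vecMulVec_star_mulVec, Complex.ofReal_re]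
  have hfix : ∀ a ∈ s, f a = 1 := fun a ha ↦ by simp only [f, hs a ha, hv, map_one]
  calc (s.card : ℝ) / (Fintype.card α : ℝ) = (Fintype.card α : ℝ)⁻¹ * ∑ a ∈ s, f a := by
        rw [Finset.sum_congr rfl hfix, Finset.sum_const, nsmul_one, inv_mul_eq_div]
    _ ≤ (Fintype.card α : ℝ)⁻¹ * ∑ a, f a := by
        gcongr
        exacts [fun a _ _ ↦ Complex.normSq_nonneg _, s.subset_univ]
    _ = _ := by
        rw [randomUnitaryChannel, smul_mulVec, dotProduct_smul, sum_mulVec, dotProduct_sum,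
          ← Complex.ofReal_natCast, ← Complex.ofReal_inv, smul_eq_mul, Complex.re_ofReal_mul,
          Complex.re_sum]
        simp only [hf]

variable [DecidableEq ι]

lemma isDensity_inv_card_smul_sum [Nonempty α] {σ : α → Matrix ι ι ℂ}
    (hσ : ∀ a, IsDensity (σ a)) : IsDensity ((Fintype.card α : ℂ)⁻¹ • ∑ a, σ a) := by
  refine ⟨(posSemidef_sum _ fun a _ ↦ (hσ a).1).smul (by positivity), ?_⟩
  rw [trace_smul, trace_sum, Finset.sum_congr rfl fun a _ ↦ (hσ a).2]
  simp

lemma isDensity_randomUnitaryChannel [Nonempty α] {W : α → Matrix ι ι ℂ}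
    (hW : ∀ a, W a ∈ unitaryGroup ι ℂ) {ρ : Matrix ι ι ℂ} (hρ : IsDensity ρ) :
    IsDensity (randomUnitaryChannel W ρ) := by
  have hterm (a : α) : IsDensity (W a * ρ * (W a)ᴴ) :=
    ⟨hρ.1.mul_mul_conjTranspose_same (W a), by
      rw [trace_mul_cycle, ← star_eq_conjTranspose, (mem_unitaryGroup_iff'.1 (hW a)), one_mul,
        hρ.2]⟩
  exact isDensity_inv_card_smul_sum hterm

end Channel

section MaxEntangled

variable {ι : Type*} [Fintype ι] [DecidableEq ι]

variable (ι) in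
noncomputable def maxEntangledVector : ι × ι → ℂ :=
  (Real.sqrt (Fintype.card ι))⁻¹ • vec (1 : Matrix ι ι ℂ)

lemma star_maxEntangledVector_dotProduct_self [Nonempty ι] :
    star (maxEntangledVector ι) ⬝ᵥ maxEntangledVector ι = 1 := by
  rw [maxEntangledVector, star_smul, star_trivial, smul_dotProduct, dotProduct_smul,
    star_vec_dotProduct_vec, conjTranspose_one, Matrix.one_mul, trace_one, smul_smul,
    ← mul_inv, Real.mul_self_sqrt (Nat.cast_nonneg _)]
  simp [Complex.real_smul]

lemma kronecker_mulVec_maxEntangledVector {X Y : Matrix ι ι ℂ} (h : X * Yᵀ = 1) :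
    (X ⊗ₖ Y) *ᵥ maxEntangledVector ι = maxEntangledVector ι := by
  rw [maxEntangledVector, mulVec_smul, kronecker_mulVec_vec, Matrix.mul_one,
    ← transpose_transpose Y, ← transpose_mul, h, transpose_one]

end MaxEntangled

section Bounds

variable {ι : Type*} [Fintype ι] [DecidableEq ι]

lemma maxOutputPNorm_le_rpow {Φ : Matrix ι ι ℂ → Matrix ι ι ℂ} {c p : ℝ} (hc : 0 ≤ c)
    (hp : 1 ≤ p) (hΦ : ∀ ρ, IsDensity ρ → IsDensity (Φ ρ) ∧ (c • 1 - Φ ρ).PosSemidef) :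
    maxOutputPNorm p Φ ≤ c ^ (1 - 1 / p) :=
  maxOutputPNorm_le (by positivity) fun ρ hρ ↦ (hΦ ρ hρ).1.schattenNorm_le (hΦ ρ hρ).2 hc hp

lemma maxOutputPNorm_transpose_le_rpow {Φ : Matrix ι ι ℂ → Matrix ι ι ℂ} {c p : ℝ}
    (hc : 0 ≤ c) (hp : 1 ≤ p)
    (hΦ : ∀ ρ, IsDensity ρ → IsDensity (Φ ρ) ∧ (c • 1 - Φ ρ).PosSemidef) :
    maxOutputPNorm p (fun ρ ↦ (Φ ρᵀ)ᵀ) ≤ c ^ (1 - 1 / p) :=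
  maxOutputPNorm_le_rpow hc hp fun _ hρ ↦
    ⟨(hΦ _ hρ.transpose).1.transpose,
      posSemidef_smul_one_sub_transpose_iff.2 (hΦ _ hρ.transpose).2⟩

lemma inv_card_le_maxOutputPNorm_kronecker_map_conj {α : Type*} [Fintype α] [Nonempty α]
    [Nonempty ι] {V : α → Matrix ι ι ℂ} (hV : ∀ a, V a ∈ unitaryGroup ι ℂ) {p : ℝ}
    (hp : 1 ≤ p) :
    (Fintype.card α : ℝ)⁻¹ ≤ maxOutputPNorm p
      (randomUnitaryChannel fun q : α × α ↦ V q.1 ⊗ₖ (V q.2).map (starRingEnd ℂ)) := by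
  set W : α × α → Matrix (ι × ι) (ι × ι) ℂ := fun q ↦ V q.1 ⊗ₖ (V q.2).map (starRingEnd ℂ)
  have hW (q : α × α) : W q ∈ unitaryGroup (ι × ι) ℂ :=
    kronecker_mem_unitary (hV q.1) (map_star_mem_unitaryGroup_iff.2 (hV q.2))
  have hφ := star_maxEntangledVector_dotProduct_self (ι := ι)
  have hfix : ∀ q ∈ (Finset.univ : Finset α).diag, W q *ᵥ maxEntangledVector ι =
      maxEntangledVector ι := by
    rintro ⟨a, b⟩ hab
    obtain ⟨-, rfl : a = b⟩ := Finset.mem_diag.1 hab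
    exact kronecker_mulVec_maxEntangledVector (mem_unitaryGroup_iff.1 (hV a))
  calc (Fintype.card α : ℝ)⁻¹
      = ((Finset.univ : Finset α).diag.card : ℝ) / (Fintype.card (α × α) : ℝ) := by
        rw [Finset.diag_card, Finset.card_univ, Fintype.card_prod]
        push_cast
        field_simp
    _ ≤ _ := le_re_dotProduct_randomUnitaryChannel_vecMulVec hφ _ hfix
    _ ≤ _ := (isDensity_randomUnitaryChannel hW (isDensity_vecMulVec_star hφ)).1.isHermitian
        |>.re_dotProduct_mulVec_le_schattenNorm (by linarith) hφ
    _ ≤ _ := schattenNorm_le_maxOutputPNorm hp (fun _ ↦ isDensity_randomUnitaryChannel hW)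
        (isDensity_vecMulVec_star hφ)

end Bounds

theorem eps_randomizing_supermultiplicative_general
    (d n : ℕ) (hd : 0 < d) (hn : 0 < n) (ε p : ℝ) (hε0 : 0 < ε)
    (hp : 2 < p)
    (V : Fin n → Matrix (Fin d) (Fin d) ℂ)
    (hV : ∀ i, V i ∈ Matrix.unitaryGroup (Fin d) ℂ)
    (N : Matrix (Fin d) (Fin d) ℂ → Matrix (Fin d) (Fin d) ℂ)
    (hN : N = fun ρ => ((n : ℂ))⁻¹ • ∑ i, V i * ρ * (V i)ᴴ)
    (Nbar : Matrix (Fin d) (Fin d) ℂ → Matrix (Fin d) (Fin d) ℂ)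
    (hNbar : Nbar = fun ρ => ((n : ℂ))⁻¹ •
      ∑ i, (V i).map (starRingEnd ℂ) * ρ * ((V i).map (starRingEnd ℂ))ᴴ)
    (Njoint : Matrix (Fin d × Fin d) (Fin d × Fin d) ℂ →
              Matrix (Fin d × Fin d) (Fin d × Fin d) ℂ)
    (hNjoint : Njoint = fun ρ => ((n : ℂ) * (n : ℂ))⁻¹ •
      ∑ i, ∑ j, (V i ⊗ₖ (V j).map (starRingEnd ℂ)) * ρ *
        (V i ⊗ₖ (V j).map (starRingEnd ℂ))ᴴ)
    (hrand : ∀ ρ : Matrix (Fin d) (Fin d) ℂ, IsDensity ρ →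
      ∀ (h : (N ρ).IsHermitian) (i : Fin d),
        |h.eigenvalues i - 1 / d| ≤ ε / d)
    (hsize : (n : ℝ) < (d : ℝ) ^ (2 - 2 / p) / (1 + ε) ^ (2 - 2 / p)) :
    maxOutputPNorm p N * maxOutputPNorm p Nbar ≤ ((1 + ε) / d) ^ (2 - 2 / p) ∧
    ((1 + ε) / d) ^ (2 - 2 / p) < 1 / n ∧
    1 / (n : ℝ) ≤ maxOutputPNorm p Njoint := by
  have : Nonempty (Fin n) := ⟨⟨0, hn⟩⟩
  have : Nonempty (Fin d) := ⟨⟨0, hd⟩⟩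
  have hp1 : 1 ≤ p := by linarith
  have hc : 0 < (1 + ε) / d := by positivity
  have hN' : N = randomUnitaryChannel V := by
    rw [hN]; funext ρ; rw [randomUnitaryChannel, Fintype.card_fin]
  have hNbar' : Nbar = fun ρ ↦ (N ρᵀ)ᵀ := by
    funext ρ
    rw [hNbar, hN', ← randomUnitaryChannel_map_conj, randomUnitaryChannel, Fintype.card_fin]
  have hNjoint' : Njoint = randomUnitaryChannel
      fun q : Fin n × Fin n ↦ V q.1 ⊗ₖ (V q.2).map (starRingEnd ℂ) := by
    funext ρ
    rw [hNjoint, randomUnitaryChannel, Fintype.card_prod, Fintype.card_fin, Fintype.sum_prod_type]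
    push_cast
    rfl
  have hNbound (ρ) (hρ : IsDensity ρ) :
      IsDensity (N ρ) ∧ (((1 + ε) / d) • 1 - N ρ).PosSemidef := by
    have hσ := hN' ▸ isDensity_randomUnitaryChannel hV hρ
    refine ⟨hσ, (hσ.1.isHermitian.posSemidef_smul_one_sub_iff _).2 fun i ↦ ?_⟩
    have := (abs_le.1 (hrand ρ hρ hσ.1.isHermitian i)).2
    rw [add_div]
    linarith
  refine ⟨?_, ?_, ?_⟩
  · calc maxOutputPNorm p N * maxOutputPNorm p Nbar
        ≤ ((1 + ε) / d) ^ (1 - 1 / p) * ((1 + ε) / d) ^ (1 - 1 / p) :=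
          mul_le_mul (maxOutputPNorm_le_rpow hc.le hp1 hNbound)
            (hNbar' ▸ maxOutputPNorm_transpose_le_rpow hc.le hp1 hNbound)
            (maxOutputPNorm_nonneg _ _) (by positivity)
      _ = ((1 + ε) / d) ^ (2 - 2 / p) := by rw [← Real.rpow_add hc]; ring_nf
  · rw [lt_div_iff₀ (by positivity)] at hsize
    rw [Real.div_rpow (by positivity) (by positivity), div_lt_div_iff₀ (by positivity)
      (by positivity)]
    linarith
  · simpa [hNjoint'] using inv_card_le_maxOutputPNorm_kronecker_map_conj hV hp1

/-- For an ε-randomizing random unitary channel 𝒩 with n unitaries,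
0 < ε < 1, and n < d^(2-2/p)/(1+ε)^(2-2/p) for some p > 2, the maximal output
p-norm is strictly supermultiplicative:
ν_p(𝒩)·ν_p(𝒩̄) ≤ ((1+ε)/d)^(2-2/p) < 1/n ≤ ν_p(𝒩 ⊗ 𝒩̄). -/
theorem eps_randomizing_supermultiplicative
    (d n : ℕ) (hd : 0 < d) (hn : 0 < n) (ε p : ℝ) (hε0 : 0 < ε) (hε1 : ε < 1)
    (hp : 2 < p)
    (V : Fin n → Matrix (Fin d) (Fin d) ℂ)
    (hV : ∀ i, V i ∈ Matrix.unitaryGroup (Fin d) ℂ)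
    (N : Matrix (Fin d) (Fin d) ℂ → Matrix (Fin d) (Fin d) ℂ)
    (hN : N = fun ρ => ((n : ℂ))⁻¹ • ∑ i, V i * ρ * (V i)ᴴ)
    (Nbar : Matrix (Fin d) (Fin d) ℂ → Matrix (Fin d) (Fin d) ℂ)
    (hNbar : Nbar = fun ρ => ((n : ℂ))⁻¹ •
      ∑ i, (V i).map (starRingEnd ℂ) * ρ * ((V i).map (starRingEnd ℂ))ᴴ)
    (Njoint : Matrix (Fin d × Fin d) (Fin d × Fin d) ℂ →
              Matrix (Fin d × Fin d) (Fin d × Fin d) ℂ)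
    (hNjoint : Njoint = fun ρ => ((n : ℂ) * (n : ℂ))⁻¹ •
      ∑ i, ∑ j, (V i ⊗ₖ (V j).map (starRingEnd ℂ)) * ρ *
        (V i ⊗ₖ (V j).map (starRingEnd ℂ))ᴴ)
    (hrand : ∀ ρ : Matrix (Fin d) (Fin d) ℂ, IsDensity ρ →
      ∀ (h : (N ρ).IsHermitian) (i : Fin d),
        |h.eigenvalues i - 1 / d| ≤ ε / d)
    (hsize : (n : ℝ) < (d : ℝ) ^ (2 - 2 / p) / (1 + ε) ^ (2 - 2 / p)) :
    maxOutputPNorm p N * maxOutputPNorm p Nbar ≤ ((1 + ε) / d) ^ (2 - 2 / p) ∧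
    ((1 + ε) / d) ^ (2 - 2 / p) < 1 / n ∧
    1 / (n : ℝ) ≤ maxOutputPNorm p Njoint :=
  eps_randomizing_supermultiplicative_general d n hd hn ε p hε0 hp V hV N hN Nbar hNbar Njoint
    hNjoint hrand hsize
end

section
/- Any ε-randomizing random unitary channel on a d-dimensional Hilbert space with 0 < ε < 1 must use at least d unitaries, i.e., n ≥ d. -/
open scoped BigOperators ComplexOrder Matrix

/-!
A random unitary channel `ρ ↦ n⁻¹ ∑ Vᵢ ρ Vᵢᴴ` sends a pure state, of rank one, to an operator
of rank at most `n`, by subadditivity of the rank. If the channel is `ε`-randomizing with `ε < 1`,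
every eigenvalue of the output lies within `ε / d < 1 / d` of `1 / d`, so none vanishes and the
output has full rank `d`. Hence `d ≤ n`.
-/

namespace Matrix

section Rank

variable {ι m n K : Type*} [Fintype n] [Field K]

theorem rank_add_le (A B : Matrix m n K) : (A + B).rank ≤ A.rank + B.rank := by
  rw [rank, rank, rank, mulVecLin_add]
  exact (Submodule.finrank_mono (LinearMap.range_add_le _ _)).trans
    (Submodule.finrank_add_le_finrank_add_finrank _ _)

theorem rank_sum_le (s : Finset ι) (A : ι → Matrix m n K) :
    (∑ i ∈ s, A i).rank ≤ ∑ i ∈ s, (A i).rank :=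
  Finset.le_sum_of_subadditive (rank : Matrix m n K → ℕ) rank_zero.le rank_add_le s A

theorem rank_smul_le (c : K) (A : Matrix m n K) : (c • A).rank ≤ A.rank := by
  rcases eq_or_ne c 0 with rfl | hc
  · simp
  · rw [rank_smul_of_mem_nonZeroDivisors A (mem_nonZeroDivisors_of_ne_zero hc)]

theorem rank_sum_mul_mul_le {l o : Type*} [Fintype m] [Fintype o] (s : Finset ι)
    (A : ι → Matrix l m K) (ρ : Matrix m n K) (B : ι → Matrix n o K) :
    (∑ i ∈ s, A i * ρ * B i).rank ≤ s.card * ρ.rank := by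
  refine (rank_sum_le s _).trans ?_
  simpa using Finset.sum_le_card_nsmul s _ ρ.rank fun i _ =>
    (rank_mul_le_left _ _).trans (rank_mul_le_right _ _)

theorem rank_single_one_le [DecidableEq n] (j : n) : (single j j (1 : K)).rank ≤ 1 := by
  rw [single_eq_single_vecMulVec_single]
  exact rank_vecMulVec_le _ _

end Rank

theorem IsHermitian.rank_eq_card_of_eigenvalues_ne_zero {n 𝕜 : Type*} [Fintype n]
    [DecidableEq n] [RCLike 𝕜] {A : Matrix n n 𝕜} (hA : A.IsHermitian)
    (h : ∀ i, hA.eigenvalues i ≠ 0) : A.rank = Fintype.card n := by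
  rw [hA.rank_eq_card_non_zero_eigs]
  exact Fintype.card_congr (Equiv.subtypeUnivEquiv h)

end Matrix

open Matrix

theorem isDensity_single {ι : Type*} [Fintype ι] [DecidableEq ι] (j : ι) :
    IsDensity (single j j (1 : ℂ)) := by
  refine ⟨?_, trace_single_eq_same j 1⟩
  simpa [single_eq_single_vecMulVec_single] using
    posSemidef_vecMulVec_self_star (Pi.single j (1 : ℂ))

theorem eps_randomizing_needs_d_unitaries_general
    (d n : ℕ) (ε : ℝ) (hε1 : ε < 1)
    (V : Fin n → Matrix (Fin d) (Fin d) ℂ)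
    (N : Matrix (Fin d) (Fin d) ℂ → Matrix (Fin d) (Fin d) ℂ)
    (hN : N = fun ρ => ((n : ℂ))⁻¹ • ∑ i, V i * ρ * (V i)ᴴ)
    (hrand : ∀ ρ : Matrix (Fin d) (Fin d) ℂ, IsDensity ρ →
      ∀ (h : (N ρ).IsHermitian) (i : Fin d),
        |h.eigenvalues i - 1 / d| ≤ ε / d) :
    d ≤ n := by
  rcases Nat.eq_zero_or_pos d with rfl | hd
  · exact Nat.zero_le n
  let j : Fin d := ⟨0, hd⟩
  set ρ := single j j (1 : ℂ)
  have hNρ : (N ρ).IsHermitian := by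
    have hpsd : ∀ i, (V i * ρ * (V i)ᴴ).PosSemidef := fun i =>
      (isDensity_single j).1.mul_mul_conjTranspose_same (V i)
    rw [hN]
    exact ((posSemidef_sum _ fun i _ => hpsd i).smul (by positivity)).isHermitian
  have heig : ∀ i, hNρ.eigenvalues i ≠ 0 := fun i => by
    have hεd : ε / d < 1 / d := by gcongr
    linarith [(abs_le.mp (hrand ρ (isDensity_single j) hNρ i)).1]
  calc d = (N ρ).rank := by rw [hNρ.rank_eq_card_of_eigenvalues_ne_zero heig, Fintype.card_fin]
    _ ≤ (∑ i, V i * ρ * (V i)ᴴ).rank := by rw [hN]; exact rank_smul_le _ _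
    _ ≤ n * ρ.rank := by simpa using rank_sum_mul_mul_le Finset.univ V ρ _
    _ ≤ n := by simpa using Nat.mul_le_mul_left n (rank_single_one_le j)

/-- Any ε-randomizing random unitary channel on a d-dimensional
Hilbert space with 0 < ε < 1 must use at least d unitaries: n ≥ d. -/
theorem eps_randomizing_needs_d_unitaries
    (d n : ℕ) (hd : 0 < d) (hn : 0 < n) (ε : ℝ) (hε0 : 0 < ε) (hε1 : ε < 1)
    (V : Fin n → Matrix (Fin d) (Fin d) ℂ)
    (hV : ∀ i, V i ∈ Matrix.unitaryGroup (Fin d) ℂ)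
    (N : Matrix (Fin d) (Fin d) ℂ → Matrix (Fin d) (Fin d) ℂ)
    (hN : N = fun ρ => ((n : ℂ))⁻¹ • ∑ i, V i * ρ * (V i)ᴴ)
    (hrand : ∀ ρ : Matrix (Fin d) (Fin d) ℂ, IsDensity ρ →
      ∀ (h : (N ρ).IsHermitian) (i : Fin d),
        |h.eigenvalues i - 1 / d| ≤ ε / d) :
    d ≤ n :=
  eps_randomizing_needs_d_unitaries_general d n ε hε1 V N hN hrand
end

section
/- Let 𝒩(ρ) = Tr_B(VρV†) be a channel defined by an isometry V : S → A⊗B obtained as V|φ⟩ = U(|0⟩⊗|φ⟩) for a unitary U on A⊗B, where S is embedded so that V† = P U† with P the orthogonal projection onto an |S|-dimensional subspace. Let 𝒩̄ be the conjugate channel defined by V̄. Then the output state (𝒩 ⊗ 𝒩̄)(Φ^{S₁S₂}) applied to the maximally entangled input state Φ^{S₁S₂} has an eigenvalue of at least |S|/(|A|·|B|). -/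
/-! The input `Φ^{S₁S₂}` is `s⁻¹ |Ω_S⟩⟨Ω_S|` with `Ω_S = ∑ₜ |tt⟩ = vec 1`, so the joint output
before tracing out `B₁B₂` is the pure state `s⁻¹ |ψ⟩⟨ψ|` with `ψ = (V ⊗ V̄) Ω_S = vec (V V†)ᵀ`.
Testing the output `σ` against `Ω_A = ∑ᵢ |ii⟩` gives `⟨Ω_A|σ|Ω_A⟩ = s⁻¹ ‖Tr_A (V V†)‖₂²`.
Since `Tr (Tr_A (V V†)) = Tr (V† V) = s`, Cauchy–Schwarz on the diagonal bounds this Frobenius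
norm below by `s² / b`. As `‖Ω_A‖² = a`, the Rayleigh quotient of `σ`, hence its largest
eigenvalue, is at least `s / (a b)`. -/

open scoped BigOperators Kronecker ComplexOrder Matrix

namespace Matrix

section Rayleigh

variable {n : Type*} [Fintype n] [DecidableEq n] {A : Matrix n n ℂ}

open scoped MatrixOrder in
theorem IsHermitian.re_dotProduct_mulVec_le (hA : A.IsHermitian) {r : ℝ}
    (hr : ∀ i, hA.eigenvalues i ≤ r) (x : n → ℂ) :
    (star x ⬝ᵥ A *ᵥ x).re ≤ r * (star x ⬝ᵥ x).re := by
  have hle : A ≤ algebraMap ℝ _ r := le_algebraMap_of_spectrum_le (fun y hy => by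
    obtain ⟨i, rfl⟩ := hA.spectrum_real_eq_range_eigenvalues ▸ hy
    exact hr i) hA.isSelfAdjoint
  have hpos := (le_iff.mp hle).dotProduct_mulVec_nonneg x
  rw [Algebra.algebraMap_eq_smul_one, sub_mulVec, smul_mulVec, one_mulVec, dotProduct_sub,
    dotProduct_smul, Complex.nonneg_iff] at hpos
  simpa [Complex.smul_re] using hpos.1

theorem IsHermitian.exists_re_dotProduct_mulVec_le_eigenvalue_mul [Nonempty n]
    (hA : A.IsHermitian) (x : n → ℂ) :
    ∃ i, (star x ⬝ᵥ A *ᵥ x).re ≤ hA.eigenvalues i * (star x ⬝ᵥ x).re := by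
  obtain ⟨i, -, hi⟩ := Finset.exists_max_image Finset.univ hA.eigenvalues Finset.univ_nonempty
  exact ⟨i, hA.re_dotProduct_mulVec_le (fun j => hi j (Finset.mem_univ j)) x⟩

end Rayleigh

variable {m n α β R : Type*}

theorem conjTranspose_mul_self_of_embedding [Semiring R] [StarRing R] [Fintype m]
    [DecidableEq m] [DecidableEq n] (e : n ↪ m) :
    (of fun x t => if x = e t then (1 : R) else 0)ᴴ
      * of (fun x t => if x = e t then (1 : R) else 0) = 1 := by
  ext t t'
  simp [mul_apply, one_apply, eq_comm, apply_ite star]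

theorem mul_vecMulVec_star_mul_conjTranspose [CommSemiring R] [StarRing R] [Fintype n]
    (W : Matrix m n R) (v : n → R) :
    W * vecMulVec v (star v) * Wᴴ = vecMulVec (W *ᵥ v) (star (W *ᵥ v)) := by
  rw [mul_vecMulVec, vecMulVec_mul, star_mulVec]

theorem of_ite_fst_eq_snd_and_eq_smul_vecMulVec [CommSemiring R] [StarRing R] [DecidableEq n]
    (c : R) : of (fun p q : n × n => if p.1 = p.2 ∧ q.1 = q.2 then c else 0)
      = c • vecMulVec (vec 1) (star (vec 1)) := by
  ext ⟨i, j⟩ ⟨k, l⟩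
  rcases eq_or_ne i j with rfl | hij <;> rcases eq_or_ne k l with rfl | hkl <;>
    simp_all [vecMulVec_apply, eq_comm]

theorem kroneckerMap_conj_mulVec_vec_one [Fintype n] [DecidableEq n] (V : Matrix m n ℂ) :
    (V ⊗ₖ V.map (starRingEnd ℂ)) *ᵥ vec 1 = vec (V * Vᴴ)ᵀ := by
  rw [kronecker_mulVec_vec, Matrix.mul_one, transpose_mul]
  rfl

theorem star_vec_one_dotProduct_mulVec_vec_one [CommSemiring R] [StarRing R] [Fintype α]
    [DecidableEq α] (S : Matrix (α × α) (α × α) R) :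
    star (vec 1) ⬝ᵥ S *ᵥ vec 1 = ∑ i, ∑ j, S (i, i) (j, j) := by
  simp [dotProduct, mulVec, Fintype.sum_prod_type, one_apply, apply_ite star]

def partialTraceFst [AddCommMonoid R] [Fintype α] (P : Matrix (α × β) (α × β) R) :
    Matrix β β R :=
  of fun k l => ∑ i, P (i, k) (i, l)

theorem trace_partialTraceFst [AddCommMonoid R] [Fintype α] [Fintype β]
    (P : Matrix (α × β) (α × β) R) : (partialTraceFst P).trace = P.trace := by
  simp [trace, partialTraceFst, Fintype.sum_prod_type, Finset.sum_comm (γ := α)]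

theorem sum_mul_star_eq_sum_normSq_partialTraceFst [Fintype α] [Fintype β]
    (P : Matrix (α × β) (α × β) ℂ) :
    ∑ i, ∑ j, ∑ k, ∑ l, P (i, k) (i, l) * star (P (j, k) (j, l))
      = ∑ k, ∑ l, (Complex.normSq (partialTraceFst P k l) : ℂ) := by
  simp_rw [← Complex.mul_conj, partialTraceFst, of_apply, map_sum, Finset.sum_mul_sum]
  calc _ = ∑ i, ∑ k, ∑ l, ∑ j, P (i, k) (i, l) * star (P (j, k) (j, l)) :=
        Finset.sum_congr rfl fun i _ => by
          rw [Finset.sum_comm]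
          exact Finset.sum_congr rfl fun k _ => Finset.sum_comm
    _ = _ := by
        rw [Finset.sum_comm]
        exact Finset.sum_congr rfl fun k _ => Finset.sum_comm

theorem normSq_trace_div_card_le_sum_normSq [Fintype n] (M : Matrix n n ℂ) :
    Complex.normSq M.trace / Fintype.card n ≤ ∑ k, ∑ l, Complex.normSq (M k l) := by
  refine div_le_of_le_mul₀ (Nat.cast_nonneg _)
    (Finset.sum_nonneg fun k _ => Finset.sum_nonneg fun l _ => Complex.normSq_nonneg _) ?_
  rw [mul_comm]
  calc Complex.normSq M.trace ≤ (∑ k, ‖M k k‖) ^ 2 := by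
        rw [Complex.normSq_eq_norm_sq]
        gcongr
        exact norm_sum_le _ _
    _ ≤ Fintype.card n * ∑ k, ‖M k k‖ ^ 2 := sq_sum_le_card_mul_sum_sq
    _ ≤ Fintype.card n * ∑ k, ∑ l, Complex.normSq (M k l) := by
        simp_rw [← Complex.normSq_eq_norm_sq]
        gcongr with k
        exact Finset.single_le_sum (fun l _ => Complex.normSq_nonneg (M k l)) (Finset.mem_univ k)

theorem star_vec_one_dotProduct_conjPairOutput_mulVec_vec_one [Fintype α] [DecidableEq α]
    [Fintype β] [Fintype n] [DecidableEq n] (V : Matrix (α × β) n ℂ) (c : ℂ) :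
    star (vec 1) ⬝ᵥ (of fun i j => ∑ k₁, ∑ k₂,
      (V ⊗ₖ V.map (starRingEnd ℂ)
        * of (fun x y : n × n => if x.1 = x.2 ∧ y.1 = y.2 then c else 0)
        * (V ⊗ₖ V.map (starRingEnd ℂ))ᴴ) ((i.1, k₁), (i.2, k₂)) ((j.1, k₁), (j.2, k₂))) *ᵥ vec 1
      = c * ∑ k, ∑ l, (Complex.normSq (partialTraceFst (V * Vᴴ) k l) : ℂ) := by
  rw [star_vec_one_dotProduct_mulVec_vec_one, of_ite_fst_eq_snd_and_eq_smul_vecMulVec,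
    Matrix.mul_smul, Matrix.smul_mul, mul_vecMulVec_star_mul_conjTranspose,
    kroneckerMap_conj_mulVec_vec_one, ← sum_mul_star_eq_sum_normSq_partialTraceFst]
  simp only [of_apply, smul_apply, vecMulVec_apply, vec, transpose_apply, Pi.star_apply,
    smul_eq_mul, Finset.mul_sum]

end Matrix

theorem conjugate_pair_channel_output_large_eigenvalue_general
    (a b s : ℕ) (ha : 0 < a)
    (U : Matrix (Fin a × Fin b) (Fin a × Fin b) ℂ)
    (hU : U ∈ Matrix.unitaryGroup (Fin a × Fin b) ℂ)
    (emb : Fin s ↪ Fin a × Fin b)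
    (E : Matrix (Fin a × Fin b) (Fin s) ℂ)
    (hE : E = Matrix.of fun x t => if x = emb t then (1 : ℂ) else 0)
    (V : Matrix (Fin a × Fin b) (Fin s) ℂ) (hVdef : V = U * E)
    (W : Matrix ((Fin a × Fin b) × (Fin a × Fin b)) (Fin s × Fin s) ℂ)
    (hW : W = V ⊗ₖ V.map (starRingEnd ℂ))
    (Φin : Matrix (Fin s × Fin s) (Fin s × Fin s) ℂ)
    (hΦin : Φin = Matrix.of fun x y =>
      if x.1 = x.2 ∧ y.1 = y.2 then ((s : ℂ))⁻¹ else 0)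
    (σ : Matrix (Fin a × Fin a) (Fin a × Fin a) ℂ)
    (hσ : σ = Matrix.of fun i j => ∑ k₁ : Fin b, ∑ k₂ : Fin b,
      (W * Φin * Wᴴ) ((i.1, k₁), (i.2, k₂)) ((j.1, k₁), (j.2, k₂)))
    (hH : σ.IsHermitian) :
    ∃ i, (s : ℝ) / ((a : ℝ) * b) ≤ hH.eigenvalues i := by
  have : Nonempty (Fin a × Fin a) := ⟨(⟨0, ha⟩, ⟨0, ha⟩)⟩
  have hV : Vᴴ * V = 1 := by
    rw [hVdef, Matrix.conjTranspose_mul, Matrix.mul_assoc, ← Matrix.mul_assoc Uᴴ,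
      ← Matrix.star_eq_conjTranspose, Matrix.mem_unitaryGroup_iff'.mp hU, Matrix.one_mul, hE,
      Matrix.conjTranspose_mul_self_of_embedding]
  have hfrob : (s : ℝ) * s / b
      ≤ ∑ k, ∑ l, Complex.normSq (Matrix.partialTraceFst (V * Vᴴ) k l) := by
    simpa [Matrix.trace_partialTraceFst, Matrix.trace_mul_comm V, hV] using
      Matrix.normSq_trace_div_card_le_sum_normSq (Matrix.partialTraceFst (V * Vᴴ))
  have hquad : (star (Matrix.vec 1) ⬝ᵥ σ *ᵥ Matrix.vec 1).re
      = (s : ℝ)⁻¹ * ∑ k, ∑ l, Complex.normSq (Matrix.partialTraceFst (V * Vᴴ) k l) := by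
    rw [hσ, hW, hΦin, Matrix.star_vec_one_dotProduct_conjPairOutput_mulVec_vec_one,
      ← Complex.ofReal_natCast, ← Complex.ofReal_inv]
    exact_mod_cast Complex.ofReal_re _
  obtain ⟨i, hi⟩ := hH.exists_re_dotProduct_mulVec_le_eigenvalue_mul (Matrix.vec 1)
  rw [hquad, Matrix.star_vec_dotProduct_vec, Matrix.conjTranspose_one, Matrix.one_mul,
    Matrix.trace_one, Fintype.card_fin] at hi
  refine ⟨i, ?_⟩
  rw [mul_comm (a : ℝ), ← div_div, div_le_iff₀ (by exact_mod_cast ha)]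
  calc (s : ℝ) / b = (s : ℝ)⁻¹ * (s * s / b) := by
        rw [inv_mul_eq_div, div_right_comm, mul_self_div_self]
    _ ≤ (s : ℝ)⁻¹ * ∑ k, ∑ l, Complex.normSq (Matrix.partialTraceFst (V * Vᴴ) k l) := by
        gcongr
    _ ≤ hH.eigenvalues i * a := by exact_mod_cast hi

/-- Let 𝒩(ρ) = Tr_B(VρV†) be the channel given by the isometry
V = U∘(embedding of S into A⊗B) for a unitary U on A⊗B, and 𝒩̄ the conjugate
channel given by V̄. Then (𝒩 ⊗ 𝒩̄)(Φ^{S₁S₂}) has an eigenvalue ≥ |S|/(|A||B|). -/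
theorem conjugate_pair_channel_output_large_eigenvalue
    (a b s : ℕ) (ha : 0 < a) (hb : 0 < b) (hs : 0 < s) (hsab : s ≤ a * b)
    (U : Matrix (Fin a × Fin b) (Fin a × Fin b) ℂ)
    (hU : U ∈ Matrix.unitaryGroup (Fin a × Fin b) ℂ)
    (emb : Fin s ↪ Fin a × Fin b)
    (E : Matrix (Fin a × Fin b) (Fin s) ℂ)
    (hE : E = Matrix.of fun x t => if x = emb t then (1 : ℂ) else 0)
    (V : Matrix (Fin a × Fin b) (Fin s) ℂ) (hVdef : V = U * E)
    (W : Matrix ((Fin a × Fin b) × (Fin a × Fin b)) (Fin s × Fin s) ℂ)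
    (hW : W = V ⊗ₖ V.map (starRingEnd ℂ))
    (Φin : Matrix (Fin s × Fin s) (Fin s × Fin s) ℂ)
    (hΦin : Φin = Matrix.of fun x y =>
      if x.1 = x.2 ∧ y.1 = y.2 then ((s : ℂ))⁻¹ else 0)
    (σ : Matrix (Fin a × Fin a) (Fin a × Fin a) ℂ)
    (hσ : σ = Matrix.of fun i j => ∑ k₁ : Fin b, ∑ k₂ : Fin b,
      (W * Φin * Wᴴ) ((i.1, k₁), (i.2, k₂)) ((j.1, k₁), (j.2, k₂)))
    (hH : σ.IsHermitian) :
    ∃ i, (s : ℝ) / ((a : ℝ) * b) ≤ hH.eigenvalues i :=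
  conjugate_pair_channel_output_large_eigenvalue_general a b s ha U hU emb E hE V hVdef W hW Φin
    hΦin σ hσ hH
end

section
/- Let A and B be finite-dimensional complex Hilbert spaces and let p > 1. Then for all unit vectors φ, ψ in A⊗B, |H_p(ψ^A) − H_p(φ^A)| ≤ (2p/(p−1))·(dim A)^{1/2 − 1/(2p)}·‖ψ − φ‖₂, i.e., the map φ ↦ H_p(φ^A) on unit vectors of A⊗B is Lipschitz with constant at most (2p/(p−1))·(dim A)^{(p−1)/(2p)}. -/
open scoped BigOperators ComplexOrder Matrix


lemma renyi_core (a : ℕ) (ha : 0 < a) (p : ℝ) (hp : 1 < p) (u v w : Fin a → ℝ)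
    (hu : ∀ j, 0 ≤ u j) (hv : ∀ j, 0 ≤ v j) (hw : ∀ j, 0 ≤ w j)
    (huvw : ∀ j, u j ≤ v j + w j)
    (hu2 : ∑ j, u j ^ 2 = 1) (hv2 : ∑ j, v j ^ 2 = 1) :
    (1 / (p - 1)) * (Real.log (∑ j, (u j ^ 2) ^ p) - Real.log (∑ j, (v j ^ 2) ^ p)) ≤
      (2 * p / (p - 1)) * (a : ℝ) ^ ((1:ℝ)/2 - 1/(2*p)) * Real.sqrt (∑ j, w j ^ 2) := by
  have hp0 : (0:ℝ) < p := by linarith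
  set s : ℝ := 2 * p with hs_def
  have hs1 : (1:ℝ) ≤ s := by simp only [hs_def]; linarith
  have hs0 : (0:ℝ) < s := by linarith
  have sq_rpow : ∀ x : ℝ, 0 ≤ x → (x ^ 2 : ℝ) ^ p = x ^ s := by
    intro x hx
    rw [← Real.rpow_natCast x 2, ← Real.rpow_mul hx]
    norm_num [hs_def]
  have hconvU : ∑ j, (u j ^ 2) ^ p = ∑ j, u j ^ s :=
    Finset.sum_congr rfl fun j _ => sq_rpow _ (hu j)
  have hconvV : ∑ j, (v j ^ 2) ^ p = ∑ j, v j ^ s :=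
    Finset.sum_congr rfl fun j _ => sq_rpow _ (hv j)
  rw [hconvU, hconvV]
  set Su := ∑ j, u j ^ s with hSu_def
  set Sv := ∑ j, v j ^ s with hSv_def
  set Sw := ∑ j, w j ^ s with hSw_def
  set S := ∑ j, w j ^ 2 with hS_def
  have hS_nonneg : 0 ≤ S := Finset.sum_nonneg fun j _ => sq_nonneg _
  -- positivity of Su, Sv
  have exists_pos : ∀ f : Fin a → ℝ, (∀ j, 0 ≤ f j) → (∑ j, f j ^ 2 = 1) → 0 < ∑ j, f j ^ s := by
    intro f hf hf2
    have hex : ∃ j, 0 < f j := by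
      by_contra h
      push_neg at h
      have : ∀ j, f j = 0 := fun j => le_antisymm (h j) (hf j)
      simp [this] at hf2
    obtain ⟨j0, hj0⟩ := hex
    refine Finset.sum_pos' (fun j _ => Real.rpow_nonneg (hf j) _) ⟨j0, Finset.mem_univ _, ?_⟩
    exact Real.rpow_pos_of_pos hj0 _
  have hSu_pos : 0 < Su := exists_pos u hu hu2
  have hSv_pos : 0 < Sv := exists_pos v hv hv2
  set Nu := Su ^ (1/s) with hNu_def
  set Nv := Sv ^ (1/s) with hNv_def
  set Nw := Sw ^ (1/s) with hNw_def
  have hNu_pos : 0 < Nu := Real.rpow_pos_of_pos hSu_pos _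
  have hNv_pos : 0 < Nv := Real.rpow_pos_of_pos hSv_pos _
  have hNw_nonneg : 0 ≤ Nw :=
    Real.rpow_nonneg (Finset.sum_nonneg fun j _ => Real.rpow_nonneg (hw j) _) _
  -- Minkowski
  have hMink : Nu ≤ Nv + Nw := by
    have h1 : Su ≤ ∑ j, (v j + w j) ^ s :=
      Finset.sum_le_sum fun j _ => Real.rpow_le_rpow (hu j) (huvw j) hs0.le
    have h2 : Nu ≤ (∑ j, (v j + w j) ^ s) ^ (1/s) :=
      Real.rpow_le_rpow hSu_pos.le h1 (by positivity)
    exact h2.trans (Real.Lp_add_le_of_nonneg Finset.univ hs1 (fun j _ => hv j) (fun j _ => hw j))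
  -- lower bound on Nv
  set ε : ℝ := 1/2 - 1/(2*p) with hε_def
  have hεnn : 0 ≤ ε := by
    rw [hε_def]
    have : 1/(2*p) ≤ 1/2 := by
      apply one_div_le_one_div_of_le <;> linarith
    linarith
  have ha1 : (1:ℝ) ≤ (a:ℝ) := by exact_mod_cast ha
  have ha0 : (0:ℝ) < (a:ℝ) := by positivity
  have hpm : (a:ℝ) ^ (1 - p) ≤ Sv := by
    have key := Real.rpow_arith_mean_le_arith_mean_rpow Finset.univ (fun _ => (a:ℝ)⁻¹)
      (fun j => v j ^ 2) (fun j _ => by positivity)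
      (by simp [Finset.card_univ]; field_simp)
      (fun j _ => sq_nonneg _) hp.le
    have hl : ∑ j, (a:ℝ)⁻¹ * v j ^ 2 = (a:ℝ)⁻¹ := by
      rw [← Finset.mul_sum, hv2, mul_one]
    have hr : ∑ j, (a:ℝ)⁻¹ * (v j ^ 2) ^ p = (a:ℝ)⁻¹ * Sv := by
      rw [← Finset.mul_sum, hconvV]
    rw [hl, hr] at key
    have h3 : ((a:ℝ)⁻¹) ^ p = (a:ℝ) ^ (-p) := by
      rw [← Real.rpow_neg_one (a:ℝ), ← Real.rpow_mul ha0.le]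
      try ring_nf
    have h4 : (a:ℝ) ^ (1 - p) = (a:ℝ) * (a:ℝ) ^ (-p) := by
      rw [Real.rpow_sub ha0, Real.rpow_one, Real.rpow_neg ha0.le, div_eq_mul_inv]
    rw [h4, ← h3]
    calc (a:ℝ) * ((a:ℝ)⁻¹) ^ p ≤ (a:ℝ) * ((a:ℝ)⁻¹ * Sv) := by
          exact mul_le_mul_of_nonneg_left key ha0.le
      _ = Sv := by field_simp
  have hNv_ge : (a:ℝ) ^ (-ε) ≤ Nv := by
    have h1 : ((a:ℝ) ^ (1-p)) ^ (1/s) ≤ Nv :=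
      Real.rpow_le_rpow (Real.rpow_nonneg ha0.le _) hpm (by positivity)
    have h2 : ((a:ℝ) ^ (1-p)) ^ (1/s) = (a:ℝ) ^ (-ε) := by
      rw [← Real.rpow_mul ha0.le]
      congr 1
      rw [hε_def, hs_def]
      field_simp
      try ring
    rwa [h2] at h1
  -- Nw ≤ √S
  have hNw_le : Nw ≤ Real.sqrt S := by
    have hterm : ∀ j, w j ^ s ≤ w j ^ 2 * S ^ (p - 1) := by
      intro j
      have h1 : w j ^ s = (w j ^ 2) ^ p := (sq_rpow _ (hw j)).symm
      have h2 : (w j ^ 2 : ℝ) ^ p = (w j ^ 2) ^ (1:ℝ) * (w j ^ 2) ^ (p - 1) := by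
        rw [← Real.rpow_add' (sq_nonneg _) (by intro h; linarith : (1:ℝ) + (p-1) ≠ 0)]
        norm_num
      have h3 : (w j ^ 2 : ℝ) ^ (p - 1) ≤ S ^ (p - 1) := by
        apply Real.rpow_le_rpow (sq_nonneg _) _ (by linarith)
        exact Finset.single_le_sum (fun j _ => sq_nonneg (w j)) (Finset.mem_univ j)
      rw [h1, h2, Real.rpow_one]
      exact mul_le_mul_of_nonneg_left h3 (sq_nonneg _)
    have hsum : Sw ≤ S ^ p := by
      calc Sw ≤ ∑ j, w j ^ 2 * S ^ (p-1) := Finset.sum_le_sum fun j _ => hterm j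
        _ = S * S ^ (p-1) := by rw [← Finset.sum_mul]
        _ = S ^ p := by
            rw [← Real.rpow_one_add' hS_nonneg (by intro h; linarith : (1:ℝ) + (p-1) ≠ 0)]
            norm_num
    have h1 : Nw ≤ (S ^ p) ^ (1/s) :=
      Real.rpow_le_rpow (Finset.sum_nonneg fun j _ => Real.rpow_nonneg (hw j) _) hsum
        (by positivity)
    have h2 : (S ^ p) ^ (1/s) = Real.sqrt S := by
      rw [← Real.rpow_mul hS_nonneg, Real.sqrt_eq_rpow]
      congr 1
      rw [hs_def]
      field_simp
    rwa [h2] at h1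
  -- log manipulations
  have hlogu : Real.log Su = s * Real.log Nu := by
    rw [hNu_def, Real.log_rpow hSu_pos]
    field_simp
  have hlogv : Real.log Sv = s * Real.log Nv := by
    rw [hNv_def, Real.log_rpow hSv_pos]
    field_simp
  have hlogdiff : Real.log Nu - Real.log Nv ≤ (a:ℝ) ^ ε * Real.sqrt S := by
    have h1 : Real.log Nu - Real.log Nv = Real.log (Nu / Nv) :=
      (Real.log_div hNu_pos.ne' hNv_pos.ne').symm
    have h2 : Real.log (Nu / Nv) ≤ Nu / Nv - 1 :=
      Real.log_le_sub_one_of_pos (by positivity)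
    have h3 : Nu / Nv - 1 ≤ Nw / Nv := by
      rw [div_sub' hNv_pos.ne', div_le_div_iff₀ hNv_pos hNv_pos]
      nlinarith [hMink]
    have h4 : Nw / Nv ≤ (a:ℝ) ^ ε * Real.sqrt S := by
      rw [div_le_iff₀ hNv_pos]
      have haa : (1:ℝ) ≤ (a:ℝ) ^ ε * Nv := by
        calc (1:ℝ) = (a:ℝ) ^ ε * (a:ℝ) ^ (-ε) := by
              rw [← Real.rpow_add ha0]; simp
          _ ≤ (a:ℝ) ^ ε * Nv :=
              mul_le_mul_of_nonneg_left hNv_ge (Real.rpow_nonneg ha0.le _)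
      calc Nw = Nw * 1 := (mul_one _).symm
        _ ≤ Real.sqrt S * ((a:ℝ) ^ ε * Nv) := by
            apply mul_le_mul hNw_le haa (by norm_num) (Real.sqrt_nonneg _)
        _ = (a:ℝ) ^ ε * Real.sqrt S * Nv := by ring
    rw [h1]
    exact h2.trans (h3.trans h4)
  -- assemble
  have hc : 0 ≤ s / (p - 1) := div_nonneg hs0.le (by linarith)
  calc (1 / (p - 1)) * (Real.log Su - Real.log Sv)
      = (s / (p-1)) * (Real.log Nu - Real.log Nv) := by
        rw [hlogu, hlogv]; ring
    _ ≤ (s / (p-1)) * ((a:ℝ) ^ ε * Real.sqrt S) := mul_le_mul_of_nonneg_left hlogdiff hc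
    _ = (2 * p / (p - 1)) * (a:ℝ) ^ ((1:ℝ)/2 - 1/(2*p)) * Real.sqrt S := by
        rw [hs_def, hε_def]; ring
noncomputable def rownorm {a b : ℕ} (Z : Matrix (Fin a) (Fin b) ℂ) (j : Fin a) : ℝ :=
  ‖(WithLp.equiv 2 (Fin b → ℂ)).symm (Z j)‖

lemma rownorm_sq {a b : ℕ} (Z : Matrix (Fin a) (Fin b) ℂ) (j : Fin a) :
    rownorm Z j ^ 2 = ∑ k, ‖Z j k‖ ^ 2 := by
  have h : rownorm Z j = Real.sqrt (∑ k, ‖Z j k‖ ^ 2) := by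
    rw [rownorm, EuclideanSpace.norm_eq]; rfl
  rw [h, Real.sq_sqrt (Finset.sum_nonneg fun k _ => sq_nonneg _)]

lemma rownorm_triangle {a b : ℕ} (X Y : Matrix (Fin a) (Fin b) ℂ) (j : Fin a) :
    rownorm X j ≤ rownorm Y j + rownorm (Y - X) j := by
  simp only [rownorm]
  have h : (WithLp.equiv 2 (Fin b → ℂ)).symm (X j)
      = (WithLp.equiv 2 (Fin b → ℂ)).symm (Y j)
        - (WithLp.equiv 2 (Fin b → ℂ)).symm ((Y - X) j) := by
    simp only [WithLp.equiv_symm_apply, ← WithLp.toLp_sub]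
    congr 1
    funext k
    simp [Matrix.sub_apply]
  rw [h]
  exact norm_sub_le _ _


lemma gram_diag {m n : Type*} [Fintype m] [Fintype n]
    (Z : Matrix m n ℂ) (j : m) :
    (Z * Zᴴ) j j = ((∑ k, ‖Z j k‖ ^ 2 : ℝ) : ℂ) := by
  rw [Matrix.mul_apply]
  push_cast
  refine Finset.sum_congr rfl fun k _ => ?_
  simp [Matrix.conjTranspose_apply, Complex.mul_conj']

lemma gram_diag' {m n : Type*} [Fintype m] [Fintype n]
    (Z : Matrix m n ℂ) (i : n) :
    (Zᴴ * Z) i i = ((∑ j, ‖Z j i‖ ^ 2 : ℝ) : ℂ) := by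
  have := gram_diag Zᴴ i
  rw [Matrix.conjTranspose_conjTranspose] at this
  rw [this]
  norm_cast
  refine Finset.sum_congr rfl fun j _ => ?_
  rw [Matrix.conjTranspose_apply]
  simp

lemma frob_inv {m n : Type*} [Fintype m] [Fintype n] [DecidableEq m]
    (V : Matrix m m ℂ) (hV : V * Vᴴ = 1) (Z : Matrix m n ℂ) :
    ∑ j, ∑ k, ‖(Vᴴ * Z) j k‖ ^ 2 = ∑ j, ∑ k, ‖Z j k‖ ^ 2 := by
  have h1 : Matrix.trace ((Vᴴ * Z) * (Vᴴ * Z)ᴴ)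
      = ((∑ j, ∑ k, ‖(Vᴴ * Z) j k‖ ^ 2 : ℝ) : ℂ) := by
    simp only [Matrix.trace, Matrix.diag]
    rw [Finset.sum_congr rfl fun j (_ : j ∈ Finset.univ) => gram_diag (Vᴴ * Z) j]
    push_cast
    rfl
  have h2 : (Vᴴ * Z) * (Vᴴ * Z)ᴴ = Vᴴ * (Z * Zᴴ) * V := by
    rw [Matrix.conjTranspose_mul, Matrix.conjTranspose_conjTranspose]
    simp only [Matrix.mul_assoc]
  have h3 : Matrix.trace (Vᴴ * (Z * Zᴴ) * V) = Matrix.trace (Z * Zᴴ) := by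
    rw [Matrix.trace_mul_cycle, ← Matrix.mul_assoc, hV, Matrix.one_mul]
  have h4 : Matrix.trace (Z * Zᴴ) = ((∑ j, ∑ k, ‖Z j k‖ ^ 2 : ℝ) : ℂ) := by
    simp only [Matrix.trace, Matrix.diag]
    rw [Finset.sum_congr rfl fun j (_ : j ∈ Finset.univ) => gram_diag Z j]
    push_cast
    rfl
  have := h1.symm.trans (by rw [h2, h3, h4])
  exact_mod_cast this

lemma diag_mix {m : Type*} [Fintype m] [DecidableEq m]
    (B : Matrix m m ℂ) (d : m → ℝ) (j : m) :
    (B * Matrix.diagonal (fun i => (d i : ℂ)) * Bᴴ) j j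
      = ((∑ i, ‖B j i‖ ^ 2 * d i : ℝ) : ℂ) := by
  rw [Matrix.mul_assoc, Matrix.mul_apply]
  push_cast
  refine Finset.sum_congr rfl fun i _ => ?_
  rw [Matrix.diagonal_mul, Matrix.conjTranspose_apply]
  have : B j i * (↑(d i) * star (B j i)) = B j i * (starRingEnd ℂ) (B j i) * ↑(d i) := by
    rw [Complex.star_def]; ring
  rw [this, Complex.mul_conj']
  try ring
lemma renyi_one_sided (a b : ℕ) (ha : 0 < a) (p : ℝ) (hp : 1 < p)
    (φ ψ : Fin a × Fin b → ℂ)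
    (hφunit : ∑ x, ‖φ x‖ ^ 2 = 1) (hψunit : ∑ x, ‖ψ x‖ ^ 2 = 1)
    (ρφ ρψ : Matrix (Fin a) (Fin a) ℂ)
    (hρφ : ρφ = Matrix.of fun i j => ∑ k, φ (i, k) * (starRingEnd ℂ) (φ (j, k)))
    (hρψ : ρψ = Matrix.of fun i j => ∑ k, ψ (i, k) * (starRingEnd ℂ) (ψ (j, k)))
    (hφH : ρφ.IsHermitian) (hψH : ρψ.IsHermitian) :
    (1 / (1 - p)) * Real.log (∑ i, hψH.eigenvalues i ^ p) -
        (1 / (1 - p)) * Real.log (∑ i, hφH.eigenvalues i ^ p) ≤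
      (2 * p / (p - 1)) * (a : ℝ) ^ ((1 : ℝ) / 2 - 1 / (2 * p)) *
        Real.sqrt (∑ x, ‖ψ x - φ x‖ ^ 2) := by
  have hp1 : (0:ℝ) < p - 1 := by linarith
  set lam := hφH.eigenvalues with hlam_def
  set mu := hψH.eigenvalues with hmu_def
  set Mφ : Matrix (Fin a) (Fin b) ℂ := Matrix.of fun i k => φ (i, k) with hMφ_def
  set Mψ : Matrix (Fin a) (Fin b) ℂ := Matrix.of fun i k => ψ (i, k) with hMψ_def
  have hρφ' : ρφ = Mφ * Mφᴴ := by
    rw [hρφ]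
    ext i j
    simp [Matrix.mul_apply, Matrix.conjTranspose_apply, hMφ_def, Complex.star_def]
  have hρψ' : ρψ = Mψ * Mψᴴ := by
    rw [hρψ]
    ext i j
    simp [Matrix.mul_apply, Matrix.conjTranspose_apply, hMψ_def, Complex.star_def]
  set V : Matrix (Fin a) (Fin a) ℂ := (hφH.eigenvectorUnitary : Matrix (Fin a) (Fin a) ℂ)
    with hV_def
  set W : Matrix (Fin a) (Fin a) ℂ := (hψH.eigenvectorUnitary : Matrix (Fin a) (Fin a) ℂ)
    with hW_def
  have hVV : V * Vᴴ = 1 := by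
    rw [← Matrix.star_eq_conjTranspose]
    exact Matrix.mem_unitaryGroup_iff.mp hφH.eigenvectorUnitary.2
  have hVV' : Vᴴ * V = 1 := by
    rw [← Matrix.star_eq_conjTranspose]
    exact Matrix.mem_unitaryGroup_iff'.mp hφH.eigenvectorUnitary.2
  have hWW : W * Wᴴ = 1 := by
    rw [← Matrix.star_eq_conjTranspose]
    exact Matrix.mem_unitaryGroup_iff.mp hψH.eigenvectorUnitary.2
  have hWW' : Wᴴ * W = 1 := by
    rw [← Matrix.star_eq_conjTranspose]
    exact Matrix.mem_unitaryGroup_iff'.mp hψH.eigenvectorUnitary.2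
  set X : Matrix (Fin a) (Fin b) ℂ := Vᴴ * Mφ with hX_def
  set Y : Matrix (Fin a) (Fin b) ℂ := Vᴴ * Mψ with hY_def
  set u : Fin a → ℝ := rownorm X with hu_def
  set v : Fin a → ℝ := rownorm Y with hv_def
  set w : Fin a → ℝ := rownorm (Y - X) with hw_def
  have hu_nn : ∀ j, 0 ≤ u j := fun j => norm_nonneg _
  have hv_nn : ∀ j, 0 ≤ v j := fun j => norm_nonneg _
  have hw_nn : ∀ j, 0 ≤ w j := fun j => norm_nonneg _
  have htri : ∀ j, u j ≤ v j + w j := fun j => rownorm_triangle X Y j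
  -- X * Xᴴ is the diagonal eigenvalue matrix
  have hXX : X * Xᴴ = Matrix.diagonal (RCLike.ofReal ∘ lam) := by
    have h2 : X * Xᴴ = Vᴴ * ρφ * V := by
      rw [hX_def, Matrix.conjTranspose_mul, Matrix.conjTranspose_conjTranspose, hρφ']
      simp only [Matrix.mul_assoc]
    have h3 := hφH.conjStarAlgAut_star_eigenvectorUnitary; rw [Unitary.conjStarAlgAut_star_apply] at h3
    rw [Matrix.star_eq_conjTranspose] at h3
    rw [h2, ← hV_def] at *
    exact h3
  have hulam : ∀ j, u j ^ 2 = lam j := by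
    intro j
    have h1 := gram_diag X j
    rw [hXX, Matrix.diagonal_apply_eq] at h1
    simp only [Function.comp_apply] at h1
    rw [hu_def, rownorm_sq]
    exact Complex.ofReal_inj.mp h1.symm
  -- sum of eigenvalues of ρφ is 1
  have hlamsum : ∑ j, lam j = 1 := by
    have h1 : Matrix.trace ρφ = ((∑ j, ∑ k, ‖Mφ j k‖ ^ 2 : ℝ) : ℂ) := by
      rw [hρφ']
      simp only [Matrix.trace, Matrix.diag]
      rw [Finset.sum_congr rfl fun j (_ : j ∈ Finset.univ) => gram_diag Mφ j]
      push_cast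
      rfl
    have h2 : Matrix.trace ρφ = ((∑ j, lam j : ℝ) : ℂ) := by
      conv_lhs => rw [hφH.spectral_theorem, Unitary.conjStarAlgAut_apply]
      rw [Matrix.trace_mul_cycle, Matrix.star_eq_conjTranspose,
        ← hV_def, hVV', Matrix.one_mul, Matrix.trace_diagonal]
      push_cast
      rfl
    have h3 : ((∑ j, lam j : ℝ) : ℂ) = ((1 : ℝ) : ℂ) := by
      rw [← h2, h1]
      norm_cast
      exact (Fintype.sum_prod_type _).symm.trans hφunit
    exact_mod_cast h3
  have hu2 : ∑ j, u j ^ 2 = 1 := by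
    rw [Finset.sum_congr rfl fun j _ => hulam j]
    exact hlamsum
  -- Σ v² = 1
  have hv2 : ∑ j, v j ^ 2 = 1 := by
    rw [Finset.sum_congr rfl fun j (_ : j ∈ Finset.univ) => rownorm_sq Y j]
    rw [hY_def, frob_inv V hVV Mψ]
    exact (Fintype.sum_prod_type _).symm.trans hψunit
  -- Σ w² = ‖ψ - φ‖²
  have hw2 : ∑ j, w j ^ 2 = ∑ x, ‖ψ x - φ x‖ ^ 2 := by
    have hYX : Y - X = Vᴴ * (Mψ - Mφ) := by rw [hY_def, hX_def, Matrix.mul_sub]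
    rw [Finset.sum_congr rfl fun j (_ : j ∈ Finset.univ) => rownorm_sq (Y - X) j]
    rw [hYX, frob_inv V hVV (Mψ - Mφ)]
    exact (Fintype.sum_prod_type (fun x : Fin a × Fin b => ‖ψ x - φ x‖ ^ 2)).symm
  -- eigenvalues of ρψ are nonneg
  have hmunn : ∀ i, 0 ≤ mu i := by
    intro i
    have hpsd : ρψ.PosSemidef := hρψ' ▸ Matrix.posSemidef_self_mul_conjTranspose Mψ
    exact hpsd.eigenvalues_nonneg i
  -- majorization
  set B : Matrix (Fin a) (Fin a) ℂ := Vᴴ * W with hB_def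
  have hYY : Y * Yᴴ = B * Matrix.diagonal (fun i => (mu i : ℂ)) * Bᴴ := by
    have h2 : Y * Yᴴ = Vᴴ * ρψ * V := by
      rw [hY_def, Matrix.conjTranspose_mul, Matrix.conjTranspose_conjTranspose, hρψ']
      simp only [Matrix.mul_assoc]
    have h3 := hψH.spectral_theorem; rw [Unitary.conjStarAlgAut_apply] at h3
    rw [Matrix.star_eq_conjTranspose] at h3
    rw [h2, h3, hB_def, Matrix.conjTranspose_mul, Matrix.conjTranspose_conjTranspose]
    simp only [Matrix.mul_assoc]
    rfl
  have hBB : B * Bᴴ = 1 := by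
    rw [hB_def, Matrix.conjTranspose_mul, Matrix.conjTranspose_conjTranspose]
    calc Vᴴ * W * (Wᴴ * V) = Vᴴ * (W * Wᴴ) * V := by simp only [Matrix.mul_assoc]
      _ = 1 := by rw [hWW, Matrix.mul_one, hVV']
  have hBB' : Bᴴ * B = 1 := by
    rw [hB_def, Matrix.conjTranspose_mul, Matrix.conjTranspose_conjTranspose]
    calc Wᴴ * V * (Vᴴ * W) = Wᴴ * (V * Vᴴ) * W := by simp only [Matrix.mul_assoc]
      _ = 1 := by rw [hVV, Matrix.mul_one, hWW']
  have hBrow : ∀ j, ∑ i, ‖B j i‖ ^ 2 = 1 := by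
    intro j
    have h1 := gram_diag B j
    rw [hBB, Matrix.one_apply_eq] at h1
    exact_mod_cast h1.symm
  have hBcol : ∀ i, ∑ j, ‖B j i‖ ^ 2 = 1 := by
    intro i
    have h1 := gram_diag' B i
    rw [hBB', Matrix.one_apply_eq] at h1
    exact_mod_cast h1.symm
  have hq : ∀ j, v j ^ 2 = ∑ i, ‖B j i‖ ^ 2 * mu i := by
    intro j
    have h1 := gram_diag Y j
    rw [hYY, diag_mix B mu j] at h1
    rw [hv_def, rownorm_sq]
    exact_mod_cast h1.symm
  have hmaj : ∑ j, (v j ^ 2) ^ p ≤ ∑ i, mu i ^ p := by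
    have step : ∀ j, (v j ^ 2) ^ p ≤ ∑ i, ‖B j i‖ ^ 2 * mu i ^ p := by
      intro j
      rw [hq j]
      exact Real.rpow_arith_mean_le_arith_mean_rpow Finset.univ _ _
        (fun i _ => sq_nonneg _) (hBrow j) (fun i _ => hmunn i) hp.le
    calc ∑ j, (v j ^ 2) ^ p ≤ ∑ j, ∑ i, ‖B j i‖ ^ 2 * mu i ^ p :=
          Finset.sum_le_sum fun j _ => step j
      _ = ∑ i, (∑ j, ‖B j i‖ ^ 2) * mu i ^ p := by
          rw [Finset.sum_comm]
          exact Finset.sum_congr rfl fun i _ => (Finset.sum_mul _ _ _).symm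
      _ = ∑ i, mu i ^ p := by
          refine Finset.sum_congr rfl fun i _ => ?_
          rw [hBcol i, one_mul]
  -- positivity of ∑ (v²)^p
  have hvpos : 0 < ∑ j, (v j ^ 2) ^ p := by
    have hex : ∃ j, 0 < v j := by
      by_contra h
      push_neg at h
      have : ∀ j, v j = 0 := fun j => le_antisymm (h j) (hv_nn j)
      simp [this] at hv2
    obtain ⟨j0, hj0⟩ := hex
    refine Finset.sum_pos' (fun j _ => Real.rpow_nonneg (sq_nonneg _) _)
      ⟨j0, Finset.mem_univ _, Real.rpow_pos_of_pos (by positivity) _⟩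
  -- apply the core lemma
  have core := renyi_core a ha p hp u v w hu_nn hv_nn hw_nn htri hu2 hv2
  rw [hw2] at core
  have hlamconv : ∑ i, lam i ^ p = ∑ j, (u j ^ 2) ^ p :=
    Finset.sum_congr rfl fun j _ => by rw [hulam j]
  have hlog1 : Real.log (∑ j, (v j ^ 2) ^ p) ≤ Real.log (∑ i, mu i ^ p) :=
    Real.log_le_log hvpos hmaj
  have h1p : (1:ℝ) / (1 - p) = -(1 / (p - 1)) := by
    rw [show (1:ℝ) - p = -(p - 1) from by ring, div_neg]
  calc (1 / (1 - p)) * Real.log (∑ i, mu i ^ p) - (1 / (1 - p)) * Real.log (∑ i, lam i ^ p)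
      = (1 / (p - 1)) * (Real.log (∑ i, lam i ^ p) - Real.log (∑ i, mu i ^ p)) := by
        rw [h1p]; ring
    _ ≤ (1 / (p - 1)) * (Real.log (∑ j, (u j ^ 2) ^ p) - Real.log (∑ j, (v j ^ 2) ^ p)) := by
        apply mul_le_mul_of_nonneg_left _ (by positivity)
        rw [hlamconv]
        linarith [hlog1]
    _ ≤ (2 * p / (p - 1)) * (a : ℝ) ^ ((1 : ℝ) / 2 - 1 / (2 * p)) *
        Real.sqrt (∑ x, ‖ψ x - φ x‖ ^ 2) := core

/-- The map φ ↦ H_p(φ^A) on unit vectors of A⊗B is Lipschitz with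
constant at most (2p/(p−1))·(dim A)^(1/2 − 1/(2p)) for p > 1:
|H_p(ψ^A) − H_p(φ^A)| ≤ (2p/(p−1))·(dim A)^(1/2−1/(2p))·‖ψ − φ‖₂. -/
theorem renyi_entropy_of_reduced_state_lipschitz
    (a b : ℕ) (ha : 0 < a) (hb : 0 < b) (p : ℝ) (hp : 1 < p)
    (φ ψ : Fin a × Fin b → ℂ)
    (hφunit : ∑ x, ‖φ x‖ ^ 2 = 1) (hψunit : ∑ x, ‖ψ x‖ ^ 2 = 1)
    (ρφ ρψ : Matrix (Fin a) (Fin a) ℂ)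
    (hρφ : ρφ = Matrix.of fun i j => ∑ k, φ (i, k) * (starRingEnd ℂ) (φ (j, k)))
    (hρψ : ρψ = Matrix.of fun i j => ∑ k, ψ (i, k) * (starRingEnd ℂ) (ψ (j, k)))
    (hφH : ρφ.IsHermitian) (hψH : ρψ.IsHermitian) :
    |(1 / (1 - p)) * Real.log (∑ i, hψH.eigenvalues i ^ p) -
        (1 / (1 - p)) * Real.log (∑ i, hφH.eigenvalues i ^ p)| ≤
      (2 * p / (p - 1)) * (a : ℝ) ^ ((1 : ℝ) / 2 - 1 / (2 * p)) *
        Real.sqrt (∑ x, ‖ψ x - φ x‖ ^ 2) := by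
  rw [abs_sub_le_iff]
  constructor
  · exact renyi_one_sided a b ha p hp φ ψ hφunit hψunit ρφ ρψ hρφ hρψ hφH hψH
  · have h := renyi_one_sided a b ha p hp ψ φ hψunit hφunit ρψ ρφ hρψ hρφ hψH hφH
    have hsym : (∑ x, ‖φ x - ψ x‖ ^ 2) = ∑ x, ‖ψ x - φ x‖ ^ 2 :=
      Finset.sum_congr rfl fun x _ => by rw [norm_sub_rev]
    rwa [hsym] at h
end

section
/- Fix a basis {|j⟩} of A and p > 1, and define on unit vectors φ ∈ A⊗B the function g_p(φ) = (1/(1−p)) ln Σ_j ⟨j|φ^A|j⟩^p. Viewing φ as a real vector of the real and imaginary parts of its coefficients, the Euclidean norm of the gradient of g_p satisfies ‖∇g_p‖₂² ≤ (4p²/(p−1)²)·(dim A)^{1−1/p} at every point of the unit sphere. -/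
/-! Write `x_j = Σ_k t_{jk}²` and `S = Σ_j x_j ^ p`. The gradient of `g_p` has `(j, k)`-entry
`2 p x_j ^ (p - 1) t_{jk} / ((1 - p) S)`, so `‖∇g_p‖² = 4p²/(p-1)² · Σ_j x_j ^ (2p - 1) / S²`.
On the simplex `x_j ^ (p - 1) ≤ S ^ ((p - 1) / p)`, whence `Σ_j x_j ^ (2p - 1) ≤ S ^ (2 - 1/p)`,
and the power-mean inequality `S ≥ n ^ (1 - p)` bounds the remaining factor `S ^ (-1/p)`
by `n ^ (1 - 1/p)`. -/

open Real

section SimplexBound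

variable {ι : Type*} [Fintype ι]

lemma rpow_sub_one_sq_mul_self {x p : ℝ} (hx : 0 ≤ x) (hp : 1 / 2 < p) :
    (x ^ (p - 1)) ^ 2 * x = x ^ (2 * p - 1) := by
  rw [show 2 * p - 1 = (p - 1) + ((p - 1) + 1) by ring, rpow_add' hx (by linarith),
    rpow_add_one' hx (by linarith)]
  ring

lemma sum_rpow_two_mul_sub_one_le {x : ι → ℝ} (hx : ∀ j, 0 ≤ x j) {p : ℝ} (hp : 1 ≤ p) :
    ∑ j, x j ^ (2 * p - 1) ≤ (∑ j, x j ^ p) ^ (2 - 1 / p) := by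
  set S := ∑ j, x j ^ p
  have hp₀ : 0 < p := by linarith
  have hS : 0 ≤ S := Finset.sum_nonneg fun j _ => rpow_nonneg (hx j) p
  have hterm : ∀ j, x j ^ (2 * p - 1) ≤ S ^ ((p - 1) / p) * x j ^ p := fun j => by
    have hxS : x j ^ p ≤ S :=
      Finset.single_le_sum (fun i _ => rpow_nonneg (hx i) p) (Finset.mem_univ j)
    calc x j ^ (2 * p - 1) = (x j ^ p) ^ ((p - 1) / p) * x j ^ p := by
          rw [← rpow_mul (hx j), mul_div_cancel₀ _ hp₀.ne',
            ← rpow_add' (hx j) (by linarith : p - 1 + p ≠ 0)]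
          ring_nf
      _ ≤ S ^ ((p - 1) / p) * x j ^ p := by
          have hxp := rpow_nonneg (hx j) p
          gcongr
  calc ∑ j, x j ^ (2 * p - 1) ≤ ∑ j, S ^ ((p - 1) / p) * x j ^ p :=
        Finset.sum_le_sum fun j _ => hterm j
    _ = S ^ ((p - 1) / p + 1) := by
        rw [← Finset.mul_sum, rpow_add_one' hS (by positivity)]
    _ = S ^ (2 - 1 / p) := by
        congr 1
        field_simp
        ring

lemma card_pos_of_sum_eq_one {x : ι → ℝ} (hx₁ : ∑ j, x j = 1) : (0 : ℝ) < Fintype.card ι := by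
  have := (Finset.univ_nonempty_iff (α := ι)).1
    (Finset.nonempty_of_sum_ne_zero (f := x) (by simp [hx₁]))
  exact_mod_cast Fintype.card_pos

lemma card_rpow_one_sub_le_sum_rpow {x : ι → ℝ} (hx : ∀ j, 0 ≤ x j) (hx₁ : ∑ j, x j = 1)
    {p : ℝ} (hp : 1 ≤ p) : (Fintype.card ι : ℝ) ^ (1 - p) ≤ ∑ j, x j ^ p := by
  have hn := card_pos_of_sum_eq_one hx₁
  have hpow := rpow_sum_le_const_mul_sum_rpow_of_nonneg (s := Finset.univ) hp fun j _ => hx j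
  rw [hx₁, one_rpow, Finset.card_univ] at hpow
  calc (Fintype.card ι : ℝ) ^ (1 - p)
      ≤ (Fintype.card ι : ℝ) ^ (1 - p) * ((Fintype.card ι : ℝ) ^ (p - 1) * ∑ j, x j ^ p) :=
        le_mul_of_one_le_right (by positivity) hpow
    _ = ∑ j, x j ^ p := by
        rw [← mul_assoc, ← rpow_add hn]
        simp

theorem sum_rpow_two_mul_sub_one_le_card_mul_sq {x : ι → ℝ} (hx : ∀ j, 0 ≤ x j)
    (hx₁ : ∑ j, x j = 1) {p : ℝ} (hp : 1 ≤ p) :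
    ∑ j, x j ^ (2 * p - 1) ≤ (Fintype.card ι : ℝ) ^ (1 - 1 / p) * (∑ j, x j ^ p) ^ 2 := by
  set S := ∑ j, x j ^ p
  have hS_lower := card_rpow_one_sub_le_sum_rpow hx hx₁ hp
  have hn := card_pos_of_sum_eq_one hx₁
  have hS : 0 < S := (rpow_pos_of_pos hn _).trans_le hS_lower
  calc ∑ j, x j ^ (2 * p - 1) ≤ S ^ (2 - 1 / p) := sum_rpow_two_mul_sub_one_le hx hp
    _ = S ^ (-(1 / p)) * S ^ 2 := by
        rw [← rpow_two, ← rpow_add hS]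
        ring_nf
    _ ≤ ((Fintype.card ι : ℝ) ^ (1 - p)) ^ (-(1 / p)) * S ^ 2 := by
        have := rpow_le_rpow_of_nonpos (by positivity) hS_lower (z := -(1 / p))
          (by rw [neg_nonpos]; positivity)
        exact mul_le_mul_of_nonneg_right this (by positivity)
    _ = (Fintype.card ι : ℝ) ^ (1 - 1 / p) * S ^ 2 := by
        rw [← rpow_mul hn.le]
        congr 2
        field_simp
        ring

end SimplexBound

lemma HasDerivAt.comp_hasGradientAt {F : Type*} [NormedAddCommGroup F] [InnerProductSpace ℝ F]
    [CompleteSpace F] {f : F → ℝ} {f' x : F} {h : ℝ → ℝ} {h' : ℝ}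
    (hh : HasDerivAt h h' (f x)) (hf : HasGradientAt f f' x) :
    HasGradientAt (h ∘ f) (h' • f') x := by
  rw [hasGradientAt_iff_hasFDerivAt, map_smul]
  exact hh.comp_hasFDerivAt x (hasGradientAt_iff_hasFDerivAt.1 hf)

section BlockWeight

variable {ι κ : Type*} [Fintype κ]

/-- For `κ = B × Fin 2` and `t` the real and imaginary parts of the coefficients of `φ`,
`blockWeight t j = ⟨j|φ^A|j⟩`. -/
def blockWeight (t : EuclideanSpace ℝ (ι × κ)) (j : ι) : ℝ := ∑ k, t (j, k) ^ 2

lemma blockWeight_nonneg (t : EuclideanSpace ℝ (ι × κ)) (j : ι) : 0 ≤ blockWeight t j := by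
  unfold blockWeight; positivity

lemma sum_blockWeight_eq_norm_sq [Fintype ι] (t : EuclideanSpace ℝ (ι × κ)) :
    ∑ j, blockWeight t j = ‖t‖ ^ 2 := by
  rw [EuclideanSpace.norm_sq_eq, Fintype.sum_prod_type]
  simp [blockWeight]

lemma norm_sq_toLp_mul_blockWeight [Fintype ι] (c : ι → ℝ) (t : EuclideanSpace ℝ (ι × κ)) :
    ‖(WithLp.toLp 2 fun i : ι × κ => c i.1 * t i : EuclideanSpace ℝ (ι × κ))‖ ^ 2 =
      ∑ j, c j ^ 2 * blockWeight t j := by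
  rw [EuclideanSpace.norm_sq_eq, Fintype.sum_prod_type]
  simp [blockWeight, Finset.mul_sum, mul_pow]

lemma hasFDerivAt_blockWeight [Fintype ι] (t : EuclideanSpace ℝ (ι × κ)) (j : ι) :
    HasFDerivAt (fun s : EuclideanSpace ℝ (ι × κ) => blockWeight s j)
      (∑ k, (2 * t (j, k)) • EuclideanSpace.proj (𝕜 := ℝ) (j, k)) t := by
  unfold blockWeight
  refine HasFDerivAt.fun_sum fun k _ => ?_
  have h := (hasDerivAt_pow 2 (t (j, k))).comp_hasFDerivAt t
    (EuclideanSpace.proj (𝕜 := ℝ) (j, k)).hasFDerivAt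
  rw [show 2 * t (j, k) = ((2 : ℕ) : ℝ) * t (j, k) ^ (2 - 1) by norm_num]
  exact h

lemma hasGradientAt_sum_comp_blockWeight [Fintype ι] {φ : ℝ → ℝ} {φ' : ι → ℝ}
    (t : EuclideanSpace ℝ (ι × κ)) (hφ : ∀ j, HasDerivAt φ (φ' j) (blockWeight t j)) :
    HasGradientAt (fun s => ∑ j, φ (blockWeight s j))
      (WithLp.toLp 2 fun i => 2 * φ' i.1 * t i) t := by
  rw [hasGradientAt_iff_hasFDerivAt]
  refine (HasFDerivAt.fun_sum fun j _ =>
    (hφ j).comp_hasFDerivAt t (hasFDerivAt_blockWeight t j)).congr_fderiv ?_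
  ext v
  simp only [sum_apply, smul_apply, PiLp.proj_apply, smul_eq_mul, Finset.mul_sum,
    InnerProductSpace.toDual_apply_apply, PiLp.inner_apply, RCLike.inner_apply, ringHom_apply,
    Fintype.sum_prod_type]
  exact Finset.sum_congr rfl fun j _ => Finset.sum_congr rfl fun k _ => by ring

noncomputable def dephasedRenyi [Fintype ι] (p : ℝ) (t : EuclideanSpace ℝ (ι × κ)) : ℝ :=
  1 / (1 - p) * log (∑ j, blockWeight t j ^ p)

theorem norm_sq_gradient_dephasedRenyi_le [Fintype ι] {p : ℝ} (hp : 1 < p)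
    {t : EuclideanSpace ℝ (ι × κ)} (ht : ‖t‖ = 1) :
    ‖gradient (dephasedRenyi p) t‖ ^ 2 ≤
      4 * p ^ 2 / (p - 1) ^ 2 * (Fintype.card ι : ℝ) ^ (1 - 1 / p) := by
  set x := blockWeight t
  set S := ∑ j, x j ^ p
  have hx : ∀ j, 0 ≤ x j := blockWeight_nonneg t
  have hx₁ : ∑ j, x j = 1 := by rw [sum_blockWeight_eq_norm_sq, ht, one_pow]
  have hS : 0 < S := (rpow_pos_of_pos (card_pos_of_sum_eq_one hx₁) _).trans_le
    (card_rpow_one_sub_le_sum_rpow hx hx₁ hp.le)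
  have hgrad : HasGradientAt (dephasedRenyi p)
      ((1 / (1 - p) * S⁻¹) • WithLp.toLp 2 fun i => 2 * (p * x i.1 ^ (p - 1)) * t i) t :=
    ((hasDerivAt_log hS.ne').const_mul _).comp_hasGradientAt
      (f := fun s => ∑ j, blockWeight s j ^ p)
      (hasGradientAt_sum_comp_blockWeight t fun _ => hasDerivAt_rpow_const (Or.inr hp.le))
  rw [hgrad.gradient, norm_smul, mul_pow,
    norm_sq_toLp_mul_blockWeight (fun j => 2 * (p * x j ^ (p - 1)))]
  calc ‖1 / (1 - p) * S⁻¹‖ ^ 2 * ∑ j, (2 * (p * x j ^ (p - 1))) ^ 2 * x j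
      = 4 * p ^ 2 / (p - 1) ^ 2 * S⁻¹ ^ 2 * ∑ j, x j ^ (2 * p - 1) := by
        simp_rw [← rpow_sub_one_sq_mul_self (hx _) (by linarith : 1 / 2 < p), Finset.mul_sum,
          Real.norm_eq_abs, sq_abs]
        refine Finset.sum_congr rfl fun j _ => ?_
        field_simp
        ring
    _ ≤ 4 * p ^ 2 / (p - 1) ^ 2 * S⁻¹ ^ 2 * ((Fintype.card ι : ℝ) ^ (1 - 1 / p) * S ^ 2) := by
        gcongr
        exact sum_rpow_two_mul_sub_one_le_card_mul_sq hx hx₁ hp.le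
    _ = 4 * p ^ 2 / (p - 1) ^ 2 * (Fintype.card ι : ℝ) ^ (1 - 1 / p) := by
        field_simp

end BlockWeight

theorem dephased_renyi_gradient_bound_general
    (a b : ℕ) (p : ℝ) (hp : 1 < p)
    (g : EuclideanSpace ℝ (Fin a × Fin b × Fin 2) → ℝ)
    (hg : g = fun t => (1 / (1 - p)) *
      Real.log (∑ j : Fin a, (∑ k : Fin b, ∑ z : Fin 2, (t (j, k, z)) ^ 2) ^ p))
    (t : EuclideanSpace ℝ (Fin a × Fin b × Fin 2)) (ht : ‖t‖ = 1) :
    ‖gradient g t‖ ^ 2 ≤ (4 * p ^ 2 / (p - 1) ^ 2) * (a : ℝ) ^ (1 - 1 / p) := by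
  have hg' : g = dephasedRenyi p := by
    funext s
    simp only [hg, dephasedRenyi, blockWeight, Fintype.sum_prod_type]
  simpa [hg'] using norm_sq_gradient_dephasedRenyi_le hp ht

/-- For the dephased Rényi functional
g_p(t) = (1/(1−p)) ln Σ_j (Σ_{k,z} t_{jkz}²)^p on the unit sphere (viewing a
unit vector of A⊗B as the real vector of real/imaginary parts of its
coefficients), the gradient satisfies ‖∇g_p‖² ≤ (4p²/(p−1)²)·(dim A)^(1−1/p). -/
theorem dephased_renyi_gradient_bound
    (a b : ℕ) (ha : 0 < a) (hb : 0 < b) (p : ℝ) (hp : 1 < p)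
    (g : EuclideanSpace ℝ (Fin a × Fin b × Fin 2) → ℝ)
    (hg : g = fun t => (1 / (1 - p)) *
      Real.log (∑ j : Fin a, (∑ k : Fin b, ∑ z : Fin 2, (t (j, k, z)) ^ 2) ^ p))
    (t : EuclideanSpace ℝ (Fin a × Fin b × Fin 2)) (ht : ‖t‖ = 1) :
    ‖gradient g t‖ ^ 2 ≤ (4 * p ^ 2 / (p - 1) ^ 2) * (a : ℝ) ^ (1 - 1 / p) :=
  dephased_renyi_gradient_bound_general a b p hp g hg t ht
end
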